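/- arXiv:1206.2721 — 4 statements merged into one kernel-verified Lean document; each statement's English description precedes it below -/
import Mathlib

section
/- Let R be a commutative ring and let p, q be prime ideals of R with p ⊄ q. Let M be an R-module that is p-torsion (every element of M is annihilated by some power of p, equivalently by a finite product of elements of p) and let N be an R-module that is q-local (every element s ∉ q acts invertibly on N). Then Hom_R(M, N) = 0. -/
/-! An element `s ∈ p ∖ q` acts invertibly on `N`, hence so does every power `s ^ n`; but some
`s ^ n` kills any given `m : M`, so `s ^ n • f m = f (s ^ n • m) = 0` forces `f m = 0`. -/

theorem LinearMap.map_eq_zero_of_pow_smul_eq_zero {R M N : Type*} [CommSemiring R]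
    [AddCommMonoid M] [Module R M] [AddCommMonoid N] [Module R N] (f : M →ₗ[R] N) {s : R}
    (hs : Function.Injective (fun x : N => s • x)) {m : M} {n : ℕ} (hm : s ^ n • m = 0) :
    f m = 0 := by
  have hsn : Function.Injective (fun x : N => s ^ n • x) := by
    simpa only [smul_iterate] using hs.iterate n
  exact hsn (by simp only [← map_smul, hm, map_zero, smul_zero])

theorem hom_torsion_to_local_eq_zero_general
    {R : Type*} [CommRing R] (p q : Ideal R) (hpq : ¬ p ≤ q)
    {M N : Type*} [AddCommGroup M] [Module R M] [AddCommGroup N] [Module R N]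
    (hM : ∀ m : M, ∃ n : ℕ, ∀ r ∈ p ^ n, r • m = 0)
    (hN : ∀ s : R, s ∉ q → Function.Bijective (fun x : N => s • x)) :
    ∀ f : M →ₗ[R] N, f = 0 := by
  obtain ⟨s, hsp, hsq⟩ := SetLike.not_le_iff_exists.mp hpq
  intro f
  ext m
  obtain ⟨n, hn⟩ := hM m
  exact f.map_eq_zero_of_pow_smul_eq_zero (hN s hsq).injective (hn _ (Ideal.pow_mem_pow hsp n))

/-- If `p ⊄ q` are primes of a commutative ring `R`, `M` is `p`-torsion and `N` is `q`-local,
then every `R`-linear map `M → N` is zero. -/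
theorem hom_torsion_to_local_eq_zero
    {R : Type*} [CommRing R] (p q : Ideal R) [p.IsPrime] [q.IsPrime] (hpq : ¬ p ≤ q)
    {M N : Type*} [AddCommGroup M] [Module R M] [AddCommGroup N] [Module R N]
    (hM : ∀ m : M, ∃ n : ℕ, ∀ r ∈ p ^ n, r • m = 0)
    (hN : ∀ s : R, s ∉ q → Function.Bijective (fun x : N => s • x)) :
    ∀ f : M →ₗ[R] N, f = 0 :=
  hom_torsion_to_local_eq_zero_general p q hpq hM hN
end

section
/- Let R be a commutative noetherian ring, V ⊆ Spec R a specialization closed subset, and E an injective R-module. Then the submodule Γ_V(E) = {e ∈ E | Supp(R·e) ⊆ V} of elements supported on V is again an injective R-module. -/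
/-!
Write `Γ` for the submodule `N`. By a Zorn argument as in the proof of Baer's criterion, `Γ` is
injective as soon as every `e ∈ E` with `I • e ⊆ Γ` can be replaced by some `e' ∈ Γ` having the
same multiples by `I`. Given `I` and `e`, let `a` be the annihilator of `I • e`. By Artin–Rees,
`aⁿ • e ∩ I • e = 0` for some `n`, so injectivity of `E` yields an endomorphism of `E` that is the
identity on `I • e` and vanishes on `aⁿ • e`. Its value `e'` at `e` is killed by `aⁿ`, hence
`Supp (R e') ⊆ V(a) = Supp (I • e) ⊆ V`.
-/

universe v

open Module.Baer PrimeSpectrum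

theorem Module.Baer.domain_eq_of_extensionOfMax_le {R : Type*} [Ring R]
    {Q X Y : Type*} [AddCommGroup Q] [Module R Q] [AddCommGroup X] [Module R X]
    [AddCommGroup Y] [Module R Y] {i : X →ₗ[R] Y} [Fact (Function.Injective i)]
    {f : X →ₗ[R] Q} {L : Y →ₗ.[R] Q} (hL : (extensionOfMax i f).toLinearPMap ≤ L) :
    L.domain = (extensionOfMax i f).domain :=
  let L' : ExtensionOf i f :=
    { L with
      le := (extensionOfMax i f).le.trans hL.1
      is_extension := fun m ↦ ((extensionOfMax i f).is_extension m).trans (hL.2 rfl) }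
  congrArg (·.domain) (extensionOfMax_is_max i f L' hL)

section Injective

variable {R : Type*} [Ring R] {E Y : Type v} [AddCommGroup E] [Module R E]
  [AddCommGroup Y] [Module R Y]

theorem Module.Injective.exists_extend_linearPMap (hE : Module.Injective R E)
    (F : Y →ₗ.[R] E) : ∃ g : Y →ₗ[R] E, ∀ x : F.domain, g x = F x :=
  hE.out F.domain.subtype Subtype.val_injective F.toFun

theorem Module.Injective.exists_extend_of_disjoint (hE : Module.Injective R E)
    {A B : Submodule R Y} (hAB : Disjoint A B) (f : A →ₗ[R] E) :
    ∃ g : Y →ₗ[R] E, (∀ a : A, g a = f a) ∧ ∀ b ∈ B, g b = 0 := by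
  let F : Y →ₗ.[R] E := ⟨A, f⟩
  let Z : Y →ₗ.[R] E := ⟨B, 0⟩
  have hFZ := LinearPMap.sup_h_of_disjoint F Z hAB
  obtain ⟨g, hg⟩ := hE.exists_extend_linearPMap (F.sup Z hFZ)
  refine ⟨g, fun a ↦ ?_, fun b hb ↦ ?_⟩
  · exact (hg ⟨a, Submodule.mem_sup_left a.2⟩).trans
      ((LinearPMap.sup_apply hFZ a 0 _ (add_zero _)).trans (add_zero _))
  · exact (hg ⟨b, Submodule.mem_sup_right hb⟩).trans
      ((LinearPMap.sup_apply hFZ 0 ⟨b, hb⟩ _ (zero_add _)).trans (by simp [Z]))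

/- Baer's criterion for `E` would need `Small.{v} R`, which is why injectivity of `E` is only
applied to modules in its own universe, inside the Zorn argument for `N`. -/
theorem Module.Baer.mem_extensionOfMax_domain {N : Submodule R E} (hE : Module.Injective R E)
    (hN : ∀ (I : Ideal R) (e : E), (∀ r ∈ I, r • e ∈ N) → ∃ e' ∈ N, ∀ r ∈ I, r • e' = r • e)
    {X : Type*} [AddCommGroup X] [Module R X] {i : X →ₗ[R] Y} [Fact (Function.Injective i)]
    (f : X →ₗ[R] N) (y : Y) :
    y ∈ (extensionOfMax i f).domain := by
  set F := (extensionOfMax i f).toLinearPMap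
  obtain ⟨g, hg⟩ := hE.exists_extend_linearPMap (N.subtype.compPMap F)
  have hgy (r : R) (hr : r • y ∈ F.domain) : r • g y = F ⟨r • y, hr⟩ := by
    rw [← map_smul]
    exact hg ⟨r • y, hr⟩
  obtain ⟨e', he'N, he'⟩ := hN (F.domain.comap (LinearMap.toSpanSingleton R Y y)) (g y)
    fun r hr ↦ hgy r hr ▸ (F _).2
  let φ : Y →ₗ.[R] N := LinearPMap.mkSpanSingleton' y ⟨e', he'N⟩ fun (c : R) hc ↦ by
    have hc' : c • y ∈ F.domain := by
      rw [hc]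
      exact F.domain.zero_mem
    ext
    rw [RingHom.id_apply, Submodule.coe_smul, he' c hc', hgy c hc']
    simp only [hc]
    exact congrArg Subtype.val F.map_zero
  have hFφ : ∀ (x : F.domain) (z : φ.domain), (x : Y) = z → F x = φ z := by
    rintro ⟨x, hx⟩ ⟨z, hz⟩ (rfl : x = z)
    obtain ⟨c, rfl⟩ := Submodule.mem_span_singleton.mp hz
    ext
    rw [LinearPMap.mkSpanSingleton'_apply]
    simp [he' c hx, hgy c hx]
  rw [← domain_eq_of_extensionOfMax_le (F.left_le_sup φ hFφ)]
  exact Submodule.mem_sup_right (Submodule.mem_span_singleton_self y)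

theorem Submodule.injective_of_forall_exists_mem_smul_eq {N : Submodule R E}
    (hE : Module.Injective R E)
    (hN : ∀ (I : Ideal R) (e : E), (∀ r ∈ I, r • e ∈ N) → ∃ e' ∈ N, ∀ r ∈ I, r • e' = r • e) :
    Module.Injective R N where
  out X Y _ _ _ _ i hi f := by
    have : Fact (Function.Injective i) := ⟨hi⟩
    have htop : (extensionOfMax i f).domain = ⊤ :=
      eq_top_iff.mpr fun y _ ↦ mem_extensionOfMax_domain hE hN f y
    exact ⟨(extensionOfMax i f).toFun ∘ₗ (LinearEquiv.ofTop _ htop).symm.toLinearMap,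
      fun x ↦ ((extensionOfMax i f).is_extension x).symm⟩

end Injective

section Commutative

variable {R : Type*} [CommRing R] {E : Type*} [AddCommGroup E] [Module R E]

theorem Module.support_subset_zeroLocus_of_pow_le_annihilator {M : Type*} [AddCommGroup M]
    [Module R M] {a : Ideal R} {n : ℕ} (h : a ^ n ≤ Module.annihilator R M) :
    Module.support R M ⊆ zeroLocus a := fun _ hp ↦
  Ideal.IsPrime.le_of_pow_le (h.trans (Module.annihilator_le_of_mem_support hp))

theorem Submodule.support_subset_of_forall_mem {A : Submodule R E} {V : Set (PrimeSpectrum R)}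
    (h : ∀ x ∈ A, Module.support R (R ∙ x) ⊆ V) : Module.support R A ⊆ V := by
  intro p hp
  obtain ⟨m, hm⟩ := Module.mem_support_iff'.mp hp
  refine h m m.2 (Module.mem_support_iff'.mpr
    ⟨⟨m, Submodule.mem_span_singleton_self _⟩, fun r hr hr0 ↦ hm r hr ?_⟩)
  ext
  simpa using congrArg Subtype.val hr0

variable [IsNoetherianRing R]

theorem Submodule.exists_pow_annihilator_smul_inf_eq_bot {M N : Submodule R E} (hM : M.FG)
    (hNM : N ≤ M) : ∃ n, N.annihilator ^ n • M ⊓ N = ⊥ := by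
  have := Module.Finite.iff_fg.mpr hM
  obtain ⟨k, hk⟩ := Ideal.exists_pow_inf_eq_pow_smul N.annihilator (N.comap M.subtype)
  refine ⟨k + 1, eq_bot_iff.mpr ?_⟩
  calc N.annihilator ^ (k + 1) • M ⊓ N
      = (N.annihilator ^ (k + 1) • ⊤ ⊓ N.comap M.subtype).map M.subtype := by
        rw [Submodule.map_inf _ M.injective_subtype, Submodule.map_smul'', Submodule.map_top,
          Submodule.range_subtype, Submodule.map_comap_subtype, inf_eq_right.mpr hNM]
    _ ≤ (N.annihilator • N.comap M.subtype).map M.subtype := by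
        rw [hk (k + 1) k.le_succ, Nat.add_sub_cancel_left, pow_one]
        exact Submodule.map_mono (smul_mono_right _ inf_le_right)
    _ = ⊥ := by
        rw [Submodule.map_smul'', Submodule.map_comap_subtype, inf_eq_right.mpr hNM,
          Submodule.annihilator_smul]

theorem Module.Injective.exists_smul_eq_and_pow_le_annihilator (hE : Module.Injective R E)
    (I : Ideal R) (e : E) :
    ∃ e' : E, ∃ n : ℕ, (∀ r ∈ I, r • e' = r • e) ∧
      (I • (R ∙ e)).annihilator ^ n ≤ (R ∙ e').annihilator := by
  obtain ⟨n, hn⟩ := Submodule.exists_pow_annihilator_smul_inf_eq_bot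
    (Submodule.fg_span_singleton e) (Submodule.smul_le_right (I := I))
  obtain ⟨g, hgI, hg0⟩ := hE.exists_extend_of_disjoint
    (disjoint_iff.mpr ((inf_comm _ _).trans hn)) (I • (R ∙ e)).subtype
  refine ⟨g e, n, fun r hr ↦ ?_, fun s hs ↦ ?_⟩
  · rw [← map_smul]
    exact hgI ⟨_, Submodule.smul_mem_smul hr (Submodule.mem_span_singleton_self e)⟩
  · rw [Submodule.mem_annihilator_span_singleton, ← map_smul]
    exact hg0 _ (Submodule.smul_mem_smul hs (Submodule.mem_span_singleton_self e))

end Commutative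

theorem torsionSubmodule_injective_of_injective_general
    {R : Type*} [CommRing R] [IsNoetherianRing R]
    (V : Set (PrimeSpectrum R))
    {E : Type*} [AddCommGroup E] [Module R E] (hE : Module.Injective R E)
    (N : Submodule R E)
    (hN : ∀ e : E, e ∈ N ↔ Module.support R ↥(Submodule.span R {e}) ⊆ V) :
    Module.Injective R ↥N := by
  refine Submodule.injective_of_forall_exists_mem_smul_eq hE fun I e hIe ↦ ?_
  obtain ⟨e', n, he', hann⟩ := hE.exists_smul_eq_and_pow_le_annihilator I e
  refine ⟨e', (hN e').mpr ?_, he'⟩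
  have : Module.Finite R ↥(I • (R ∙ e)) := Module.Finite.iff_fg.mpr
    (Submodule.FG.smul (IsNoetherian.noetherian I) (Submodule.fg_span_singleton e))
  calc Module.support R (R ∙ e') ⊆ zeroLocus (I • (R ∙ e)).annihilator :=
        Module.support_subset_zeroLocus_of_pow_le_annihilator hann
    _ = Module.support R ↥(I • (R ∙ e)) := Module.support_eq_zeroLocus.symm
    _ ⊆ V := Submodule.support_subset_of_forall_mem fun x hx ↦ by
        obtain ⟨r, hr, rfl⟩ := Submodule.mem_smul_span_singleton.mp hx
        exact (hN _).mp (hIe r hr)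

/-- Over a commutative noetherian ring, the `V`-torsion submodule of an injective module is
injective, for any specialization closed subset `V ⊆ Spec R`. -/
theorem torsionSubmodule_injective_of_injective
    {R : Type*} [CommRing R] [IsNoetherianRing R]
    (V : Set (PrimeSpectrum R))
    (hV : ∀ p ∈ V, ∀ q : PrimeSpectrum R, p.asIdeal ≤ q.asIdeal → q ∈ V)
    {E : Type*} [AddCommGroup E] [Module R E] (hE : Module.Injective R E)
    (N : Submodule R E)
    (hN : ∀ e : E, e ∈ N ↔ Module.support R ↥(Submodule.span R {e}) ⊆ V) :
    Module.Injective R ↥N :=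
  torsionSubmodule_injective_of_injective_general V hE N hN
end

section
/- Let R be a commutative noetherian Gorenstein ring (R has finite injective dimension over itself) and let 0 → G' → G → G'' → 0 be a short exact sequence of R-modules in which G' and G are Gorenstein injective. Then G'' is Gorenstein injective. -/
open CategoryTheory

/-- An `R`-module `G` is Gorenstein injective if it is the zeroth syzygy of a totally acyclic
complex of injective `R`-modules. -/
def IsGorensteinInjective (R : Type) [CommRing R]
    (G : Type) [AddCommGroup G] [Module R G] : Prop :=
  ∃ (E : ℤ → ModuleCat.{0} R) (d : ∀ i : ℤ, E i ⟶ E (i + 1)),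
    (∀ i, Module.Injective R (E i)) ∧
    (∀ i, LinearMap.range (d i).hom = LinearMap.ker (d (i + 1)).hom) ∧
    (∀ (I : ModuleCat.{0} R), Module.Injective R I →
      ∀ (i : ℤ) (f : I ⟶ E (i + 1)), f ≫ d (i + 1) = 0 →
        ∃ g : I ⟶ E i, g ≫ d i = f) ∧
    Nonempty (G ≃ₗ[R] LinearMap.ker (d 0).hom)

/-- A commutative ring is Gorenstein if it has finite injective dimension as a module over
itself, i.e. `R` admits a finite injective resolution `0 → R → E^0 → ⋯ → E^n → 0`. -/
def IsGorensteinRing (R : Type) [CommRing R] : Prop :=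
  ∃ (n : ℕ) (E : ℕ → ModuleCat.{0} R) (d : ∀ i : ℕ, E i ⟶ E (i + 1))
    (ε : ModuleCat.of R R ⟶ E 0),
    (∀ i, Module.Injective R (E i)) ∧
    Function.Injective ε ∧
    LinearMap.range ε.hom = LinearMap.ker (d 0).hom ∧
    (∀ i, LinearMap.range (d i).hom = LinearMap.ker (d (i + 1)).hom) ∧
    (∀ i, n < i → Subsingleton (E i))

/-!
Call a class `𝒞` of modules totally acyclic if every `N ∈ 𝒞` satisfies `Ext¹(I, N) = 0` for all
injective `I` and sits in short exact sequences `0 → N → J → N' → 0` and `0 → N'' → J' → N → 0`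
with `J`, `J'` injective and `N'`, `N'' ∈ 𝒞`. Splicing these sequences gives a totally acyclic
complex of injectives, and the syzygies of such a complex form a totally acyclic class, so a module
is Gorenstein injective iff it lies in a totally acyclic class: closure properties become
coinductive. By the horseshoe lemma the extensions of Gorenstein injectives form a totally acyclic
class, so Gorenstein injectives are closed under extensions.

Given `0 → G' → G → G'' → 0`, choose `0 → G' → J → A' → 0` with `J` injective and `A'` Gorenstein
injective. The pushout `P` of `J ← G' → G` is an extension of `A'` by `G`, hence Gorenstein
injective, and `0 → J → P → G'' → 0` splits. For `P ↪ J₀` and `E₀ ↠ P` from the complete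
resolution of `P`, the cokernel of `G'' ↪ P ↪ J₀` and the kernel of `E₀ ↠ P ↠ G''` are extensions
of Gorenstein injectives, which makes `G''` Gorenstein injective.
-/

open LinearMap

theorem exists_seq_of_forall_exists {α : Type*} {p : α → Prop} {r : α → α → Prop}
    (h : ∀ a, p a → ∃ b, p b ∧ r a b) {a : α} (ha : p a) :
    ∃ f : ℕ → α, f 0 = a ∧ ∀ n, p (f n) ∧ r (f n) (f (n + 1)) := by
  choose next hnext using h
  let f : ℕ → {a // p a} := fun n ↦
    Nat.rec ⟨a, ha⟩ (fun _ b ↦ ⟨next b.1 b.2, (hnext b.1 b.2).1⟩) n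
  exact ⟨fun n ↦ (f n).1, rfl, fun n ↦ ⟨(f n).2, (hnext _ _).2⟩⟩

section Ring

variable {R : Type} [Ring R]

section Modules

variable {A B C D E J M N P : Type} [AddCommGroup A] [AddCommGroup B] [AddCommGroup C]
  [AddCommGroup D] [AddCommGroup E] [AddCommGroup J] [AddCommGroup M] [AddCommGroup N]
  [AddCommGroup P] [Module R A] [Module R B] [Module R C] [Module R D] [Module R E] [Module R J]
  [Module R M] [Module R N] [Module R P]

theorem LinearMap.exists_comp_eq_of_ker_le {p : M →ₗ[R] N} (hp : Function.Surjective p)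
    {f : M →ₗ[R] P} (h : ker p ≤ ker f) : ∃ g : N →ₗ[R] P, g ∘ₗ p = f :=
  ⟨(ker p).liftQ f h ∘ₗ (p.quotKerEquivOfSurjective hp).symm.toLinearMap, by
    ext x
    have : (p.quotKerEquivOfSurjective hp).symm (p x) = Submodule.Quotient.mk x := by
      rw [LinearEquiv.symm_apply_eq]; rfl
    simp [this]⟩

theorem LinearMap.exists_comp_eq_of_range_le {i : M →ₗ[R] N} (hi : Function.Injective i)
    {f : P →ₗ[R] N} (h : range f ≤ range i) : ∃ g : P →ₗ[R] M, i ∘ₗ g = f :=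
  ⟨(LinearEquiv.ofInjective i hi).symm.toLinearMap ∘ₗ codRestrict (range i) f fun x ↦ h ⟨x, rfl⟩,
    by ext x; simp⟩

theorem Function.Exact.exists_section_of_retraction {i : M →ₗ[R] N} {p : N →ₗ[R] P}
    (hip : Function.Exact i p) (hp : Function.Surjective p) {r : N →ₗ[R] M} (hr : r ∘ₗ i = .id) :
    ∃ s : P →ₗ[R] N, p ∘ₗ s = .id := by
  obtain ⟨e, -, he⟩ := hip.splitInjectiveEquiv hp ⟨r, hr⟩
  exact ⟨e.symm.toLinearMap ∘ₗ inr R M P, by ext x; simp [he]⟩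

theorem Function.Exact.prodMap_id_left {f : M →ₗ[R] N} {g : N →ₗ[R] P}
    (hfg : Function.Exact f g) :
    Function.Exact (prodMap (LinearMap.id : J →ₗ[R] J) f) (g ∘ₗ snd R J N) := by
  rintro ⟨j, n⟩
  simp only [coe_comp, Function.comp_apply, snd_apply, hfg n, Set.mem_range, coe_prodMap,
    Prod.map, id_coe, id_eq, Prod.mk.injEq, Prod.exists]
  exact ⟨fun ⟨m, hm⟩ ↦ ⟨j, m, rfl, hm⟩, fun ⟨_, m, _, hm⟩ ↦ ⟨m, hm⟩⟩

instance Module.Injective.prod [Module.Injective R M] [Module.Injective R N] :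
    Module.Injective R (M × N) where
  out _ _ _ _ _ _ f hf g := by
    obtain ⟨gM, hM⟩ := Module.Injective.out f hf (fst R M N ∘ₗ g)
    obtain ⟨gN, hN⟩ := Module.Injective.out f hf (snd R M N ∘ₗ g)
    exact ⟨gM.prod gN, fun x ↦ Prod.ext (hM x) (hN x)⟩

theorem Module.Injective.of_subsingleton [Subsingleton M] : Module.Injective R M :=
  ⟨fun _ _ _ _ _ _ _ _ _ ↦ ⟨0, fun _ ↦ Subsingleton.elim _ _⟩⟩

theorem Function.Exact.exists_exact_fst_eqLocus {f : A →ₗ[R] B} {g : B →ₗ[R] C}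
    (hf : Function.Injective f) (hfg : Function.Exact f g) (hg : Function.Surjective g)
    (t : J →ₗ[R] C) :
    ∃ i : A →ₗ[R] eqLocus (t ∘ₗ fst R J B) (g ∘ₗ snd R J B), Function.Injective i ∧
      Function.Exact i (fst R J B ∘ₗ (eqLocus (t ∘ₗ fst R J B) (g ∘ₗ snd R J B)).subtype) ∧
      Function.Surjective (fst R J B ∘ₗ (eqLocus (t ∘ₗ fst R J B) (g ∘ₗ snd R J B)).subtype) := by
  refine ⟨codRestrict _ (inr R J B ∘ₗ f) fun a ↦ ?_, ?_, ?_, ?_⟩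
  · show t 0 = g (f a)
    rw [map_zero, hfg.apply_apply_eq_zero]
  · exact fun a a' h ↦ hf (by simpa using congrArg Prod.snd (Subtype.ext_iff.1 h))
  · rintro ⟨⟨j, b⟩, hjb⟩
    simp only [mem_eqLocus, coe_comp, Function.comp_apply, fst_apply, snd_apply] at hjb
    simp only [coe_comp, Function.comp_apply, Submodule.coe_subtype, fst_apply, Set.mem_range,
      Subtype.ext_iff, codRestrict_apply, inr_apply, Prod.ext_iff]
    constructor
    · rintro rfl
      obtain ⟨a, rfl⟩ := (hfg b).1 (by simpa using hjb.symm)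
      exact ⟨a, rfl, rfl⟩
    · rintro ⟨a, rfl, -⟩
      rfl
  · intro j
    obtain ⟨b, hb⟩ := hg (t j)
    exact ⟨⟨(j, b), hb.symm⟩, rfl⟩

/-- The third isomorphism theorem `0 → B/A → D/A → D/B → 0`, for `C ≅ B/A` and `E ≅ D/B`. -/
theorem Function.Exact.exists_exact_mkQ_range_comp {f : A →ₗ[R] B} {g : B →ₗ[R] C}
    {f' : B →ₗ[R] D} {g' : D →ₗ[R] E} (hfg : Function.Exact f g) (hg : Function.Surjective g)
    (hf' : Function.Injective f') (hfg' : Function.Exact f' g') (hg' : Function.Surjective g') :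
    ∃ (φ : C →ₗ[R] D ⧸ range (f' ∘ₗ f)) (ψ : D ⧸ range (f' ∘ₗ f) →ₗ[R] E),
      Function.Injective φ ∧ Function.Exact φ ψ ∧ Function.Surjective ψ ∧
      ψ ∘ₗ (range (f' ∘ₗ f)).mkQ = g' := by
  set N := range (f' ∘ₗ f)
  have hN : N ≤ ker g' := by
    rintro _ ⟨a, rfl⟩
    simp [hfg'.apply_apply_eq_zero]
  obtain ⟨φ, hφ⟩ := exists_comp_eq_of_ker_le hg (f := N.mkQ ∘ₗ f') <| by
    rw [hfg.linearMap_ker_eq]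
    rintro _ ⟨a, rfl⟩
    simpa using ⟨a, rfl⟩
  have hφg (b : B) : φ (g b) = N.mkQ (f' b) := LinearMap.congr_fun hφ b
  refine ⟨φ, N.liftQ g' hN, ?_, ?_, ?_, N.liftQ_mkQ g' hN⟩
  · refine (injective_iff_map_eq_zero φ).2 fun c hc ↦ ?_
    obtain ⟨b, rfl⟩ := hg c
    rw [hφg, Submodule.mkQ_apply, Submodule.Quotient.mk_eq_zero] at hc
    obtain ⟨a, ha⟩ := hc
    rw [← hf' ha, hfg.apply_apply_eq_zero]
  · intro z
    obtain ⟨d, rfl⟩ := N.mkQ_surjective z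
    rw [Submodule.mkQ_apply, Submodule.liftQ_apply, hfg' d]
    constructor
    · rintro ⟨b, rfl⟩
      exact ⟨g b, hφg b⟩
    · rintro ⟨c, hc⟩
      obtain ⟨b, rfl⟩ := hg c
      rw [hφg] at hc
      have := congrArg (N.liftQ g' hN) hc
      simp only [Submodule.mkQ_apply, Submodule.liftQ_apply, hfg'.apply_apply_eq_zero] at this
      exact (hfg' d).1 this.symm
  · intro e
    obtain ⟨d, rfl⟩ := hg' e
    exact ⟨N.mkQ d, rfl⟩

end Modules

def IsShortExact (A B C : ModuleCat.{0} R) : Prop :=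
  ∃ (f : A →ₗ[R] B) (g : B →ₗ[R] C),
    Function.Injective f ∧ Function.Exact f g ∧ Function.Surjective g

namespace IsShortExact

variable {A B C J K W A' B' C' : ModuleCat.{0} R}

theorem congr (e₁ : A ≃ₗ[R] A') (e₂ : B ≃ₗ[R] B') (e₃ : C ≃ₗ[R] C') (h : IsShortExact A B C) :
    IsShortExact A' B' C' := by
  obtain ⟨f, g, hf, hfg, hg⟩ := h
  refine ⟨e₂.toLinearMap ∘ₗ f ∘ₗ e₁.symm.toLinearMap, e₃.toLinearMap ∘ₗ g ∘ₗ e₂.symm.toLinearMap,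
    ?_, ?_, ?_⟩
  · simpa using e₂.injective.comp (hf.comp e₁.symm.injective)
  · rw [← LinearMap.comp_assoc, LinearEquiv.precomp_exact_iff_exact,
      LinearEquiv.postcomp_exact_iff_exact, LinearEquiv.conj_exact_iff_exact]
    exact hfg
  · simpa using e₃.surjective.comp (hg.comp e₂.symm.surjective)

theorem prod_left (J : ModuleCat.{0} R) (h : IsShortExact A B C) :
    IsShortExact (.of R (J × A)) (.of R (J × B)) C := by
  obtain ⟨f, g, hf, hfg, hg⟩ := h
  exact ⟨prodMap .id f, g ∘ₗ snd R J B, Function.injective_id.prodMap hf, hfg.prodMap_id_left,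
    hg.comp Prod.snd_surjective⟩

theorem prod_right (J : ModuleCat.{0} R) (h : IsShortExact A B C) :
    IsShortExact A (.of R (B × J)) (.of R (C × J)) := by
  obtain ⟨f, g, hf, hfg, hg⟩ := h
  refine ⟨inl R B J ∘ₗ f, prodMap g .id, inl_injective.comp hf, ?_,
    hg.prodMap Function.surjective_id⟩
  rintro ⟨b, j⟩
  simp only [coe_prodMap, Prod.map, id_coe, id_eq, Prod.mk_eq_zero, hfg b, Set.mem_range,
    coe_comp, Function.comp_apply, inl_apply, Prod.mk.injEq]
  exact ⟨fun ⟨⟨a, ha⟩, hj⟩ ↦ ⟨a, ha, hj.symm⟩, fun ⟨a, ha, hj⟩ ↦ ⟨⟨a, ha⟩, hj.symm⟩⟩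

theorem nonempty_linearEquiv_prod_of_injective [Module.Injective R J] (h : IsShortExact J B C) :
    Nonempty (B ≃ₗ[R] J × C) := by
  obtain ⟨f, g, hf, hfg, hg⟩ := h
  obtain ⟨r, hr⟩ := Module.Injective.out f hf LinearMap.id
  exact ⟨(hfg.splitInjectiveEquiv hg ⟨r, LinearMap.ext hr⟩).1⟩

theorem swap_of_injective [Module.Injective R J] (h : IsShortExact J B C) :
    IsShortExact C B J := by
  obtain ⟨e⟩ := h.nonempty_linearEquiv_prod_of_injective
  have : IsShortExact C (.of R (J × C)) J :=
    ⟨inr R J C, fst R J C, inr_injective, Function.Exact.inr_fst, Prod.fst_surjective⟩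
  exact this.congr (.refl R C) e.symm (.refl R J)

theorem of_pushout {f : A →ₗ[R] B} {g : B →ₗ[R] C} (hf : Function.Injective f)
    (hfg : Function.Exact f g) (hg : Function.Surjective g) (a : A →ₗ[R] J) :
    IsShortExact J (.of R ((J × B) ⧸ range (a.prod f))) C := by
  set N := range (a.prod f)
  have hN : N ≤ ker (g ∘ₗ snd R J B) := by
    rintro _ ⟨x, rfl⟩
    simp [hfg.apply_apply_eq_zero]
  refine ⟨N.mkQ ∘ₗ inl R J B, N.liftQ _ hN, ?_, ?_, ?_⟩
  · intro j j' h
    obtain ⟨x, hx⟩ := (Submodule.Quotient.eq N).1 h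
    have := Prod.ext_iff.1 hx
    simp only [prod_apply, Function.prod, Prod.fst_sub, Prod.snd_sub, inl_apply, sub_self]
      at this
    rw [← sub_eq_zero, ← this.1, hf (this.2.trans (map_zero f).symm), map_zero]
  · intro z
    obtain ⟨⟨j, b⟩, rfl⟩ := N.mkQ_surjective z
    simp only [Submodule.mkQ_apply, Submodule.liftQ_apply, coe_comp, Function.comp_apply,
      snd_apply, hfg b, Set.mem_range, inl_apply]
    constructor
    · rintro ⟨x, rfl⟩
      refine ⟨j - a x, (Submodule.Quotient.eq N).2 ⟨-x, ?_⟩⟩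
      simp
    · rintro ⟨j', hj'⟩
      have := congrArg (N.liftQ _ hN) hj'
      simp only [Submodule.liftQ_apply, coe_comp, Function.comp_apply, snd_apply,
        map_zero] at this
      exact (hfg b).1 this.symm
  · intro c
    obtain ⟨b, rfl⟩ := hg c
    exact ⟨N.mkQ (0, b), rfl⟩

theorem exists_pushout (h₁ : IsShortExact A B C) (h₂ : IsShortExact A J A') :
    ∃ P, IsShortExact J P C ∧ IsShortExact B P A' := by
  obtain ⟨f, g, hf, hfg, hg⟩ := h₁
  obtain ⟨a, b, ha, hab, hb⟩ := h₂
  refine ⟨_, of_pushout hf hfg hg a, (of_pushout ha hab hb f).congr (.refl R B) ?_ (.refl R A')⟩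
  refine Submodule.Quotient.equiv _ _ (LinearEquiv.prodComm R B J) ?_
  rw [Submodule.map_equiv_eq_comap_symm]
  ext ⟨j, b⟩
  simp [and_comm]

theorem exists_pullback (h₁ : IsShortExact A W B) (h₂ : IsShortExact K J B) :
    ∃ P, IsShortExact A P J ∧ IsShortExact K P W := by
  obtain ⟨u, v, hu, huv, hv⟩ := h₁
  obtain ⟨i, p, hi, hip, hp⟩ := h₂
  obtain ⟨a, ha, haq, hq⟩ := huv.exists_exact_fst_eqLocus hu hv p
  obtain ⟨k, hk, hkq, hq'⟩ := hip.exists_exact_fst_eqLocus hi hp v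
  have h : IsShortExact K (.of R (eqLocus (v ∘ₗ fst R W J) (p ∘ₗ snd R W J))) W :=
    ⟨k, _, hk, hkq, hq'⟩
  refine ⟨.of R _, ⟨a, _, ha, haq, hq⟩, h.congr (.refl R K) ?_ (.refl R W)⟩
  refine LinearEquiv.ofSubmodules (LinearEquiv.prodComm R W J) _ _ ?_
  ext ⟨j, w⟩
  simp [eq_comm]

theorem exists_coker_comp (h₁ : IsShortExact A B C) (h₂ : IsShortExact B J C') :
    ∃ Q, IsShortExact C Q C' ∧ IsShortExact A J Q := by
  obtain ⟨f, g, hf, hfg, hg⟩ := h₁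
  obtain ⟨f', g', hf', hfg', hg'⟩ := h₂
  obtain ⟨φ, ψ, hφ, hφψ, hψ, -⟩ := hfg.exists_exact_mkQ_range_comp hg hf' hfg' hg'
  exact ⟨.of R _, ⟨φ, ψ, hφ, hφψ, hψ⟩,
    ⟨f' ∘ₗ f, Submodule.mkQ _, hf'.comp hf, exact_map_mkQ_range _, Submodule.mkQ_surjective _⟩⟩

theorem exists_ker_comp (h₁ : IsShortExact K J B) (h₂ : IsShortExact A B C) :
    ∃ W, IsShortExact K W A ∧ IsShortExact W J C := by
  obtain ⟨i, p, hi, hip, hp⟩ := h₁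
  obtain ⟨f, g, hf, hfg, hg⟩ := h₂
  set N := ker (g ∘ₗ p)
  obtain ⟨ψ, hψ⟩ := exists_comp_eq_of_range_le hf (f := p ∘ₗ N.subtype) <| by
    rw [← hfg.linearMap_ker_eq]
    rintro _ ⟨w, rfl⟩
    exact w.2
  have hfψ (w : N) : f (ψ w) = p w := LinearMap.congr_fun hψ w
  refine ⟨.of R N, ⟨codRestrict N i fun k ↦ ?_, ψ, ?_, ?_, ?_⟩,
    N.subtype, g ∘ₗ p, N.injective_subtype, exact_subtype_ker_map _, hg.comp hp⟩
  · simp [N, hip.apply_apply_eq_zero]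
  · exact fun k k' h ↦ hi (congrArg Subtype.val h)
  · intro w
    rw [← (injective_iff_map_eq_zero' f).1 hf, hfψ, hip w]
    exact ⟨fun ⟨k, hk⟩ ↦ ⟨k, Subtype.ext hk⟩, fun ⟨k, hk⟩ ↦ ⟨k, congrArg Subtype.val hk⟩⟩
  · intro a
    obtain ⟨j, hj⟩ := hp (f a)
    have hjN : j ∈ N := by simp [N, hj, hfg.apply_apply_eq_zero]
    exact ⟨⟨j, hjN⟩, hf (by rw [hfψ, ← hj])⟩

end IsShortExact

/-- Elementary form of `Ext¹(I, M) = 0` for every injective `I`: every extension of an injective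
module by `M` splits. -/
def InjExtVanishes (M : ModuleCat.{0} R) : Prop :=
  ∀ (Z I : ModuleCat.{0} R) (i : M →ₗ[R] Z) (p : Z →ₗ[R] I), Module.Injective R I →
    Function.Injective i → Function.Exact i p → Function.Surjective p →
      ∃ s : I →ₗ[R] Z, p ∘ₗ s = .id

namespace InjExtVanishes

variable {M A B C : ModuleCat.{0} R}

theorem exists_lift (hM : InjExtVanishes M) {X Y I : Type} [AddCommGroup X] [AddCommGroup Y]
    [AddCommGroup I] [Module R X] [Module R Y] [Module R I] [Module.Injective R I]
    {i : M →ₗ[R] X} {p : X →ₗ[R] Y} (hi : Function.Injective i) (hip : Function.Exact i p)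
    (hp : Function.Surjective p) (t : I →ₗ[R] Y) : ∃ s : I →ₗ[R] X, p ∘ₗ s = t := by
  obtain ⟨k, hk, hkq, hq⟩ := hip.exists_exact_fst_eqLocus hi hp t
  obtain ⟨s, hs⟩ := hM (.of R _) (.of R I) k _ inferInstance hk hkq hq
  refine ⟨snd R I X ∘ₗ Submodule.subtype _ ∘ₗ s, LinearMap.ext fun y ↦ ?_⟩
  have hy : (s y : I × X).1 = y := LinearMap.congr_fun hs y
  simpa [hy] using ((s y).2 : t (s y : I × X).1 = p (s y : I × X).2).symm

theorem of_linearEquiv (e : M ≃ₗ[R] A) (hM : InjExtVanishes M) : InjExtVanishes A :=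
  fun Z I i p hI hi hip hp ↦
    hM Z I (i ∘ₗ e.toLinearMap) p hI (hi.comp e.injective)
      (LinearEquiv.precomp_exact_iff_exact.2 hip) hp

theorem of_injective [Module.Injective R M] : InjExtVanishes M := by
  intro Z I i p _ hi hip hp
  obtain ⟨r, hr⟩ := Module.Injective.out i hi LinearMap.id
  exact hip.exists_section_of_retraction hp (LinearMap.ext hr)

theorem of_prod (h : InjExtVanishes (.of R (A × M))) : InjExtVanishes M := by
  intro Z I i p hI hi hip hp
  obtain ⟨s, hs⟩ := h (.of R (A × Z)) I (prodMap .id i) (p ∘ₗ snd R A Z) hI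
    (Function.injective_id.prodMap hi) hip.prodMap_id_left (hp.comp Prod.snd_surjective)
  exact ⟨snd R A Z ∘ₗ s, by rw [← hs]; rfl⟩

theorem of_isShortExact (h : IsShortExact A B C) (hA : InjExtVanishes A)
    (hC : InjExtVanishes C) : InjExtVanishes B := by
  obtain ⟨u, v, hu, huv, hv⟩ := h
  intro Z I i p hI hi hip hp
  obtain ⟨φ, ψ, hφ, hφψ, hψ, hψp⟩ := huv.exists_exact_mkQ_range_comp hv hi hip hp
  obtain ⟨s₁, hs₁⟩ := hC (.of R _) I φ ψ hI hφ hφψ hψ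
  obtain ⟨s, hs⟩ := hA.exists_lift (hi.comp hu) (exact_map_mkQ_range _)
    (Submodule.mkQ_surjective _) s₁
  exact ⟨s, by rw [← hψp, comp_assoc, hs, hs₁]⟩

end InjExtVanishes

def IsInjCosyzygy (N N' : ModuleCat.{0} R) : Prop :=
  ∃ J : ModuleCat.{0} R, Module.Injective R J ∧ IsShortExact N J N'

theorem IsInjCosyzygy.congr {N N' M M' : ModuleCat.{0} R} (e : N ≃ₗ[R] M) (e' : N' ≃ₗ[R] M')
    (h : IsInjCosyzygy N N') : IsInjCosyzygy M M' :=
  let ⟨J, hJ, hNJ⟩ := h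
  ⟨J, hJ, hNJ.congr e (.refl R J) e'⟩

namespace IsShortExact

variable {A W B A' B' : ModuleCat.{0} R}

theorem nonempty_linearEquiv_prod_of_injExtVanishes {I : ModuleCat.{0} R} [Module.Injective R I]
    (h : IsShortExact A B I) (hA : InjExtVanishes A) :
    Nonempty (B ≃ₗ[R] A × I) := by
  obtain ⟨f, g, hf, hfg, hg⟩ := h
  obtain ⟨s, hs⟩ := hA B I f g inferInstance hf hfg hg
  exact ⟨(hfg.splitSurjectiveEquiv hf ⟨s, hs⟩).1⟩

theorem horseshoe_cosyzygy (h : IsShortExact A W B) (hA : IsInjCosyzygy A A')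
    (hB : IsInjCosyzygy B B') : ∃ W', IsInjCosyzygy W W' ∧ IsShortExact A' W' B' := by
  obtain ⟨JA, _, hA⟩ := hA
  obtain ⟨JB, _, hB⟩ := hB
  -- the pushout `P` of `JA ← A → W` splits as `JA × B`, so `W ↪ P ↪ JA × JB`
  obtain ⟨P, hJP, hWP⟩ := h.exists_pushout hA
  obtain ⟨e⟩ := hJP.nonempty_linearEquiv_prod_of_injective
  obtain ⟨W', hW', hWJ⟩ :=
    hWP.exists_coker_comp ((hB.prod_left JA).congr e.symm (.refl R _) (.refl R _))
  exact ⟨W', ⟨_, Module.Injective.prod, hWJ⟩, hW'⟩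

theorem horseshoe_syzygy (h : IsShortExact A W B) (hAv : InjExtVanishes A)
    (hA : IsInjCosyzygy A' A) (hB : IsInjCosyzygy B' B) :
    ∃ W', IsInjCosyzygy W' W ∧ IsShortExact A' W' B' := by
  obtain ⟨JA, _, hA⟩ := hA
  obtain ⟨JB, _, hB⟩ := hB
  -- the pullback `P` of `W → B ← JB` splits as `A × JB`, so `JA × JB ↠ P ↠ W`
  obtain ⟨P, hAP, hBP⟩ := h.exists_pullback hB
  obtain ⟨e⟩ := hAP.nonempty_linearEquiv_prod_of_injExtVanishes hAv
  obtain ⟨W', hW', hWJ⟩ :=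
    (hA.prod_right JB).exists_ker_comp (hBP.congr (.refl R _) e (.refl R _))
  exact ⟨W', ⟨_, Module.Injective.prod, hWJ⟩, hW'⟩

end IsShortExact

def IsTotallyAcyclicClass (𝒞 : ModuleCat.{0} R → Prop) : Prop :=
  ∀ N, 𝒞 N → InjExtVanishes N ∧ (∃ N', 𝒞 N' ∧ IsInjCosyzygy N N') ∧
    ∃ N', 𝒞 N' ∧ IsInjCosyzygy N' N

end Ring

section Gorenstein

variable {R : Type} [CommRing R]

theorem isGorensteinInjective_of_splice (K : ℤ → ModuleCat.{0} R)
    (hK : ∀ i, InjExtVanishes (K i)) (hstep : ∀ i, IsInjCosyzygy (K i) (K (i + 1))) :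
    IsGorensteinInjective R (K 0) := by
  choose E hE ι π hι hιπ hπ using hstep
  have hexact (i : ℤ) : Function.Exact (ι (i + 1) ∘ₗ π i) (ι (i + 1 + 1) ∘ₗ π (i + 1)) := by
    rw [(hι _).comp_exact_iff_exact, (hπ i).comp_exact_iff_exact]
    exact hιπ (i + 1)
  refine ⟨E, fun i ↦ ModuleCat.ofHom (ι (i + 1) ∘ₗ π i), hE,
    fun i ↦ (hexact i).linearMap_ker_eq.symm, ?_, ⟨?_⟩⟩
  · intro I hI i f hf
    have hπf (x : I) : π (i + 1) (f x) = 0 :=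
      hι (i + 1 + 1) (by simpa using congr(($hf).hom x))
    obtain ⟨f₁, hf₁⟩ := exists_comp_eq_of_range_le (hι (i + 1)) (f := f.hom) <| by
      rintro _ ⟨x, rfl⟩
      exact (hιπ (i + 1) _).1 (hπf x)
    obtain ⟨g, hg⟩ := (hK i).exists_lift (hι i) (hιπ i) (hπ i) f₁
    refine ⟨ModuleCat.ofHom g, ModuleCat.hom_ext ?_⟩
    simp [← hf₁, ← hg, comp_assoc]
  · rw [ModuleCat.hom_ofHom, ker_comp_of_ker_eq_bot _ (ker_eq_bot.2 (hι _)),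
      (hιπ 0).linearMap_ker_eq]
    exact LinearEquiv.ofInjective (ι 0) (hι 0)

theorem IsTotallyAcyclicClass.isGorensteinInjective {𝒞 : ModuleCat.{0} R → Prop}
    (h𝒞 : IsTotallyAcyclicClass 𝒞) {N : ModuleCat.{0} R} (hN : 𝒞 N) :
    IsGorensteinInjective R N := by
  obtain ⟨S, hS0, hS⟩ := exists_seq_of_forall_exists (fun M hM ↦ (h𝒞 M hM).2.1) hN
  obtain ⟨T, hT0, hT⟩ := exists_seq_of_forall_exists (r := fun M M' ↦ IsInjCosyzygy M' M)
    (fun M hM ↦ (h𝒞 M hM).2.2) hN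
  let K : ℤ → ModuleCat.{0} R
    | .ofNat n => S n
    | .negSucc n => T (n + 1)
  have hK : ∀ i, 𝒞 (K i) := by
    rintro (n | n)
    exacts [(hS n).1, (hT (n + 1)).1]
  rw [← hS0]
  refine isGorensteinInjective_of_splice K (fun i ↦ (h𝒞 _ (hK i)).1) ?_
  rintro (n | _ | n)
  · exact (hS n).2
  · show IsInjCosyzygy (T 1) (S 0)
    rw [hS0, ← hT0]
    exact (hT 0).2
  · exact (hT (n + 1)).2

theorem injExtVanishes_ker {E : ℤ → ModuleCat.{0} R} {d : ∀ i : ℤ, E i ⟶ E (i + 1)}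
    (hE : ∀ i, Module.Injective R (E i)) (hd : ∀ i, range (d i).hom = ker (d (i + 1)).hom)
    (hlift : ∀ (I : ModuleCat.{0} R), Module.Injective R I → ∀ (i : ℤ) (f : I ⟶ E (i + 1)),
      f ≫ d (i + 1) = 0 → ∃ g : I ⟶ E i, g ≫ d i = f) (k : ℤ) :
    InjExtVanishes (.of R (ker (d k).hom)) := by
  intro Z I ι p hI hι hιp hp
  obtain ⟨α, hα⟩ := (hE k).out ι hι (ker (d k).hom).subtype
  obtain ⟨β, hβ⟩ := exists_comp_eq_of_ker_le hp (f := (d k).hom ∘ₗ α) <| by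
    rw [hιp.linearMap_ker_eq]
    rintro _ ⟨x, rfl⟩
    simp [hα]
  have hβp (z : Z) : β (p z) = d k (α z) := LinearMap.congr_fun hβ z
  have hβd : ModuleCat.ofHom β ≫ d (k + 1) = 0 := by
    ext y
    obtain ⟨z, rfl⟩ := hp y
    have : (d k).hom (α z) ∈ ker (d (k + 1)).hom := hd k ▸ ⟨α z, rfl⟩
    simpa [hβp] using this
  obtain ⟨γ, hγ⟩ := hlift (.of R I) hI k _ hβd
  have hr (z : Z) : α z - γ.hom (p z) ∈ ker (d k).hom := by
    have : d k (γ.hom (p z)) = β (p z) := congr((ModuleCat.Hom.hom $hγ) (p z))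
    simp [this, hβp]
  refine hιp.exists_section_of_retraction hp (r := codRestrict _ (α - γ.hom ∘ₗ p) hr) ?_
  ext x
  simp [hα, hιp.apply_apply_eq_zero]

theorem isTotallyAcyclicClass_ker {E : ℤ → ModuleCat.{0} R} {d : ∀ i : ℤ, E i ⟶ E (i + 1)}
    (hE : ∀ i, Module.Injective R (E i)) (hd : ∀ i, range (d i).hom = ker (d (i + 1)).hom)
    (hlift : ∀ (I : ModuleCat.{0} R), Module.Injective R I → ∀ (i : ℤ) (f : I ⟶ E (i + 1)),
      f ≫ d (i + 1) = 0 → ∃ g : I ⟶ E i, g ≫ d i = f) :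
    IsTotallyAcyclicClass fun M : ModuleCat.{0} R ↦ ∃ k, Nonempty (M ≃ₗ[R] ker (d k).hom) := by
  have hstep (j : ℤ) :
      IsInjCosyzygy (.of R (ker (d j).hom)) (.of R (ker (d (j + 1)).hom)) := by
    refine ⟨E j, hE j, (ker (d j).hom).subtype, codRestrict _ (d j).hom fun x ↦ hd j ▸ ⟨x, rfl⟩,
      Submodule.injective_subtype _, ?_, ?_⟩
    · rw [← (Submodule.injective_subtype _).comp_exact_iff_exact]
      exact exact_subtype_ker_map _
    · rintro ⟨y, hy⟩
      obtain ⟨x, rfl⟩ := (hd j).ge hy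
      exact ⟨x, rfl⟩
  rintro M ⟨k, ⟨e⟩⟩
  -- writing `k = j + 1` makes `d j` land in `E k` definitionally
  obtain ⟨j, rfl⟩ : ∃ j, k = j + 1 := ⟨k - 1, by ring⟩
  exact ⟨(injExtVanishes_ker hE hd hlift _).of_linearEquiv e.symm,
    ⟨_, ⟨j + 1 + 1, ⟨.refl R _⟩⟩, (hstep _).congr e.symm (.refl R _)⟩,
    ⟨_, ⟨j, ⟨.refl R _⟩⟩, (hstep j).congr (.refl R _) e.symm⟩⟩

theorem isTotallyAcyclicClass_isGorensteinInjective :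
    IsTotallyAcyclicClass fun N : ModuleCat.{0} R ↦ IsGorensteinInjective R N := by
  rintro N ⟨E, d, hE, hd, hlift, ⟨e⟩⟩
  have h𝒞 := isTotallyAcyclicClass_ker hE hd hlift
  obtain ⟨hN, ⟨N', hN', hNN'⟩, N'', hN'', hN''N⟩ := h𝒞 N ⟨0, ⟨e⟩⟩
  exact ⟨hN, ⟨N', h𝒞.isGorensteinInjective hN', hNN'⟩,
    N'', h𝒞.isGorensteinInjective hN'', hN''N⟩

theorem isGorensteinInjective_iff {N : ModuleCat.{0} R} :
    IsGorensteinInjective R N ↔ InjExtVanishes N ∧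
      (∃ N' : ModuleCat.{0} R, IsGorensteinInjective R N' ∧ IsInjCosyzygy N N') ∧
      ∃ N' : ModuleCat.{0} R, IsGorensteinInjective R N' ∧ IsInjCosyzygy N' N := by
  refine ⟨isTotallyAcyclicClass_isGorensteinInjective N, fun hN ↦ ?_⟩
  refine IsTotallyAcyclicClass.isGorensteinInjective
    (𝒞 := fun M ↦ IsGorensteinInjective R M ∨ M = N) (fun M hM ↦ ?_) (.inr rfl)
  obtain ⟨h, ⟨M', hM', h'⟩, M'', hM'', h''⟩ :=
    hM.elim (isTotallyAcyclicClass_isGorensteinInjective M) (· ▸ hN)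
  exact ⟨h, ⟨M', .inl hM', h'⟩, M'', .inl hM'', h''⟩

theorem isGorensteinInjective_of_injective (N : ModuleCat.{0} R) [Module.Injective R N] :
    IsGorensteinInjective R N := by
  refine IsTotallyAcyclicClass.isGorensteinInjective (𝒞 := fun M ↦ Module.Injective R M)
    (fun M hM ↦ ?_) ‹_›
  have h0 : Module.Injective R (ModuleCat.of R PUnit) := .of_subsingleton
  refine ⟨.of_injective, ⟨_, h0, M, hM, .id, 0, Function.injective_id, ?_, ?_⟩,
    ⟨_, h0, M, hM, 0, .id, Function.injective_of_subsingleton _, ?_, Function.surjective_id⟩⟩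
  · exact (exact_zero_iff_surjective _ _).2 Function.surjective_id
  · exact fun _ ↦ ⟨0, Subsingleton.elim _ _⟩
  · exact (exact_zero_iff_injective _ _).2 Function.injective_id

theorem IsShortExact.isGorensteinInjective_middle {A B C : ModuleCat.{0} R}
    (h : IsShortExact A B C) (hA : IsGorensteinInjective R A) (hC : IsGorensteinInjective R C) :
    IsGorensteinInjective R B := by
  refine IsTotallyAcyclicClass.isGorensteinInjective (𝒞 := fun W ↦ ∃ A C : ModuleCat.{0} R,
    IsGorensteinInjective R A ∧ IsGorensteinInjective R C ∧ IsShortExact A W C)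
    ?_ ⟨A, C, hA, hC, h⟩
  rintro W ⟨A, C, hA, hC, h⟩
  obtain ⟨hAv, ⟨A', hA', hAA'⟩, A'', hA'', hA''A⟩ := isGorensteinInjective_iff.1 hA
  obtain ⟨hCv, ⟨C', hC', hCC'⟩, C'', hC'', hC''C⟩ := isGorensteinInjective_iff.1 hC
  obtain ⟨W', hWW', hW'⟩ := h.horseshoe_cosyzygy hAA' hCC'
  obtain ⟨W'', hW''W, hW''⟩ := h.horseshoe_syzygy hAv hA''A hC''C
  exact ⟨InjExtVanishes.of_isShortExact h hAv hCv, ⟨W', ⟨A', C', hA', hC', hW'⟩, hWW'⟩,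
    W'', ⟨A'', C'', hA'', hC'', hW''⟩, hW''W⟩

theorem IsShortExact.isGorensteinInjective_right_of_injective {J P C : ModuleCat.{0} R}
    [Module.Injective R J] (h : IsShortExact J P C) (hP : IsGorensteinInjective R P) :
    IsGorensteinInjective R C := by
  obtain ⟨hPv, ⟨P', hP', J₀, hJ₀, hPP'⟩, P'', hP'', E₀, hE₀, hP''P⟩ :=
    isGorensteinInjective_iff.1 hP
  obtain ⟨e⟩ := h.nonempty_linearEquiv_prod_of_injective
  have hJ := isGorensteinInjective_of_injective J
  obtain ⟨Q, hQ, hCQ⟩ := h.swap_of_injective.exists_coker_comp hPP'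
  obtain ⟨W, hW, hWC⟩ := hP''P.exists_ker_comp h
  exact isGorensteinInjective_iff.2 ⟨(hPv.of_linearEquiv (A := .of R (J × C)) e).of_prod,
    ⟨Q, hQ.isGorensteinInjective_middle hJ hP', J₀, hJ₀, hCQ⟩,
    W, hW.isGorensteinInjective_middle hP'' hJ, E₀, hE₀, hWC⟩

end Gorenstein

theorem isGorensteinInjective_of_shortExact_general
    (R : Type) [CommRing R]
    (G' G G'' : Type) [AddCommGroup G'] [Module R G'] [AddCommGroup G] [Module R G]
    [AddCommGroup G''] [Module R G'']
    (f : G' →ₗ[R] G) (g : G →ₗ[R] G'')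
    (hf : Function.Injective f) (hg : Function.Surjective g)
    (hfg : LinearMap.range f = LinearMap.ker g)
    (h1 : IsGorensteinInjective R G') (h2 : IsGorensteinInjective R G) :
    IsGorensteinInjective R G'' := by
  have hSES : IsShortExact (.of R G') (.of R G) (.of R G'') :=
    ⟨f, g, hf, LinearMap.exact_iff.2 hfg.symm, hg⟩
  obtain ⟨-, ⟨A', hA', J, _, hG'J⟩, -⟩ := (isGorensteinInjective_iff (N := .of R G')).1 h1
  obtain ⟨P, hJP, hGP⟩ := hSES.exists_pushout hG'J
  exact hJP.isGorensteinInjective_right_of_injective (hGP.isGorensteinInjective_middle h2 hA')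

/-- Over a noetherian Gorenstein ring, the class of Gorenstein injective modules is closed
under cokernels of monomorphisms: in a short exact sequence `0 → G' → G → G'' → 0` with
`G'` and `G` Gorenstein injective, `G''` is Gorenstein injective. -/
theorem isGorensteinInjective_of_shortExact
    (R : Type) [CommRing R] [IsNoetherianRing R] (hR : IsGorensteinRing R)
    (G' G G'' : Type) [AddCommGroup G'] [Module R G'] [AddCommGroup G] [Module R G]
    [AddCommGroup G''] [Module R G'']
    (f : G' →ₗ[R] G) (g : G →ₗ[R] G'')
    (hf : Function.Injective f) (hg : Function.Surjective g)
    (hfg : LinearMap.range f = LinearMap.ker g)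
    (h1 : IsGorensteinInjective R G') (h2 : IsGorensteinInjective R G) :
    IsGorensteinInjective R G'' :=
  isGorensteinInjective_of_shortExact_general R G' G G'' f g hf hg hfg h1 h2
end

section
/- Let R be a commutative noetherian ring of Krull dimension n and let G be a Gorenstein injective R-module with complete injective resolution E. Then for any specialization closed V ⊆ Spec R, the complex Γ_V(E), obtained by applying the V-torsion functor termwise, is an acyclic complex of injective R-modules. -/
/-!
`Γ_V` preserves injectives by Baer's criterion: a map `φ` from an ideal `b` into `Γ_V(I)` has
finitely generated image, killed by an ideal `a` with `V(a) ⊆ V`; by Artin–Rees `φ` kills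
`a ^ k ∩ b`, so it extends from `b / (a ^ k ∩ b) ⊆ R / a ^ k` to `R / a ^ k → I`, and the image of
`1` lies in `Γ_V(I)`.

For acyclicity, a cycle `x` of `Γ_V(E)` already lies in `Γ_{V(a)}(E)` for `a = ann x`, and it
suffices to show that `Γ_{V(a)}(E)` is exact for finitely generated `a = (f₁, …, fᵣ)`. Adding one
generator `f` replaces an exact complex of injectives by its `f`-power torsion, which stays
exact because every injective module over a noetherian ring is `f`-divisible modulo `f`-power
torsion.
-/

open CategoryTheory PrimeSpectrum

universe u

section Injective

variable {R : Type u} [CommRing R] {Q : Type u} [AddCommGroup Q] [Module R Q]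
  [Module.Injective R Q]

theorem Module.Injective.exists_comp_eq_of_ker_le {M N : Type*} [AddCommGroup M] [Module R M]
    [AddCommGroup N] [Module R N] (f : M →ₗ[R] N) (g : M →ₗ[R] Q)
    (h : LinearMap.ker f ≤ LinearMap.ker g) : ∃ g' : N →ₗ[R] Q, g' ∘ₗ f = g := by
  obtain ⟨g', hg'⟩ := Module.Injective.extension_property R Q _ N
    ((LinearMap.range f).subtype ∘ₗ f.quotKerEquivRange.toLinearMap)
    ((LinearMap.range f).injective_subtype.comp f.quotKerEquivRange.injective)
    ((LinearMap.ker f).liftQ g h)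
  refine ⟨g', LinearMap.ext fun x => ?_⟩
  simpa using LinearMap.congr_fun hg' (Submodule.Quotient.mk x)

theorem Module.Injective.exists_le_torsionOf_and_smul_eq {b c : Ideal R} (φ : b →ₗ[R] Q)
    (hφ : Submodule.comap b.subtype c ≤ LinearMap.ker φ) :
    ∃ q : Q, c ≤ Ideal.torsionOf R Q q ∧ ∀ x : b, (x : R) • q = φ x := by
  obtain ⟨g, hg⟩ := exists_comp_eq_of_ker_le (c.mkQ ∘ₗ b.subtype) φ
    (by rwa [LinearMap.ker_comp, Submodule.ker_mkQ])
  refine ⟨g (c.mkQ 1), fun r hr => ?_, fun x => ?_⟩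
  · rw [Ideal.mem_torsionOf_iff, ← map_smul, ← map_smul, smul_eq_mul, mul_one,
      Submodule.mkQ_apply, (Submodule.Quotient.mk_eq_zero c).2 hr, map_zero]
  · rw [← map_smul, ← map_smul, smul_eq_mul, mul_one, ← LinearMap.congr_fun hg x]
    rfl

/-- Divisibility by `f` up to `f`-power torsion: `Q → Q_f` is onto. -/
theorem Module.Injective.exists_pow_smul_eq_pow_smul [IsNoetherianRing R] (f : R) (q : Q)
    (t : ℕ) : ∃ (s : ℕ) (w : Q), f ^ (s + t) • w = f ^ s • q := by
  obtain ⟨s, hs⟩ := monotone_stabilizes_iff_noetherian.mpr inferInstance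
    (⟨fun n => Ideal.torsionOf R R (f ^ n), fun n m hnm r hr => by
      obtain ⟨c, rfl⟩ := Nat.exists_eq_add_of_le hnm
      simp only [Ideal.mem_torsionOf_iff, smul_eq_mul, pow_add, ← mul_assoc] at hr ⊢
      rw [hr, zero_mul]⟩ : ℕ →o Ideal R)
  have hker : LinearMap.ker (LinearMap.toSpanSingleton R R (f ^ (s + t))) ≤
      LinearMap.ker (LinearMap.toSpanSingleton R Q (f ^ s • q)) := by
    intro r hr
    have hr' : r ∈ Ideal.torsionOf R R (f ^ s) := (hs (s + t) (Nat.le_add_right s t)).ge hr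
    rw [Ideal.mem_torsionOf_iff] at hr'
    rw [LinearMap.mem_ker, LinearMap.toSpanSingleton_apply, smul_smul, ← smul_eq_mul, hr',
      zero_smul]
  obtain ⟨g, hg⟩ := exists_comp_eq_of_ker_le _ _ hker
  refine ⟨s, g 1, ?_⟩
  simpa [← map_smul] using LinearMap.congr_fun hg 1

end Injective

section SupportTorsion

variable {R : Type u} [CommRing R]

/-- `Γ_V(M)`, with `Supp(R ∙ m)` written as `V(ann m)`. -/
def supportTorsion (V : Set (PrimeSpectrum R)) (M : Type*) [AddCommGroup M] [Module R M] :
    Submodule R M where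
  carrier := {m | zeroLocus (Ideal.torsionOf R M m : Set R) ⊆ V}
  zero_mem' := by
    rw [Set.mem_ofPred_eq, Ideal.torsionOf_zero, Submodule.top_coe,
      zeroLocus_empty_of_one_mem (Set.mem_univ 1)]
    exact V.empty_subset
  add_mem' {x y} hx hy := by
    have hle : Ideal.torsionOf R M x ⊓ Ideal.torsionOf R M y ≤ Ideal.torsionOf R M (x + y) := by
      rintro r ⟨hrx, hry⟩
      rw [SetLike.mem_coe, Ideal.mem_torsionOf_iff] at hrx hry
      rw [Ideal.mem_torsionOf_iff, smul_add, hrx, hry, add_zero]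
    refine (zeroLocus_anti_mono (SetLike.coe_subset_coe.2 hle)).trans ?_
    rw [zeroLocus_inf]
    exact Set.union_subset hx hy
  smul_mem' c x hx := by
    refine (zeroLocus_anti_mono fun r hr => ?_).trans hx
    rw [SetLike.mem_coe, Ideal.mem_torsionOf_iff] at hr ⊢
    rw [smul_comm, hr, smul_zero]

variable {V W : Set (PrimeSpectrum R)} {M N : Type*} [AddCommGroup M] [Module R M]
  [AddCommGroup N] [Module R N]

theorem mem_supportTorsion {m : M} :
    m ∈ supportTorsion V M ↔ zeroLocus (Ideal.torsionOf R M m : Set R) ⊆ V :=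
  Iff.rfl

theorem mem_supportTorsion_iff_support_subset {m : M} :
    m ∈ supportTorsion V M ↔ Module.support R (R ∙ m) ⊆ V := by
  rw [Module.support_eq_zeroLocus, ← Submodule.annihilator,
    Ideal.annihilator_span_singleton_eq_torsionOf, mem_supportTorsion]

theorem supportTorsion_mono (h : V ⊆ W) : supportTorsion V M ≤ supportTorsion W M :=
  fun _ hm => hm.trans h

theorem supportTorsion_inter :
    supportTorsion (V ∩ W) M = supportTorsion V M ⊓ supportTorsion W M :=
  Submodule.ext fun _ => Set.subset_inter_iff

theorem mem_supportTorsion_zeroLocus_singleton {f : R} {m : M} :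
    m ∈ supportTorsion (zeroLocus {f}) M ↔ ∃ t : ℕ, f ^ t • m = 0 := by
  rw [mem_supportTorsion, ← zeroLocus_span {f}, zeroLocus_subset_zeroLocus_iff,
    Ideal.span_singleton_le_iff_mem, Ideal.mem_radical_iff]
  simp only [Ideal.mem_torsionOf_iff]

theorem mem_supportTorsion_of_pow_le {a : Ideal R} (ha : zeroLocus (a : Set R) ⊆ V) {k : ℕ}
    {m : M} (hk : a ^ k ≤ Ideal.torsionOf R M m) : m ∈ supportTorsion V M :=
  fun p hp => ha (p.isPrime.le_of_pow_le (hk.trans hp))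

theorem map_mem_supportTorsion (g : M →ₗ[R] N) {m : M} (hm : m ∈ supportTorsion V M) :
    g m ∈ supportTorsion V N := by
  refine (zeroLocus_anti_mono fun r hr => ?_).trans hm
  rw [SetLike.mem_coe, Ideal.mem_torsionOf_iff] at hr ⊢
  rw [← map_smul, hr, map_zero]

theorem support_supportTorsion_subset : Module.support R (supportTorsion V M) ⊆ V := by
  intro p hp
  obtain ⟨m, hm⟩ := Module.mem_support_iff_exists_annihilator.mp hp
  rw [Ideal.annihilator_span_singleton_eq_torsionOf] at hm
  refine m.2 fun r hr => hm ?_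
  rw [SetLike.mem_coe, Ideal.mem_torsionOf_iff] at hr
  exact (Ideal.mem_torsionOf_iff _ _).2 (Subtype.ext hr)

/-- Artin–Rees for `b ⊆ R`: `a ^ (k + 1) ∩ b ⊆ a • b`. -/
theorem exists_comap_pow_le_ker [IsNoetherianRing R] {a b : Ideal R} (φ : b →ₗ[R] M)
    (ha : ∀ r ∈ a, ∀ x, r • φ x = 0) :
    ∃ k, Submodule.comap b.subtype (a ^ k) ≤ LinearMap.ker φ := by
  obtain ⟨k, hk⟩ := Ideal.exists_pow_inf_eq_pow_smul a (b : Submodule R R)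
  refine ⟨k + 1, fun x hx => ?_⟩
  have hAR : a ^ (k + 1) • ⊤ ⊓ (b : Submodule R R) ≤ a • b := by
    rw [hk (k + 1) (Nat.le_succ k), Nat.add_sub_cancel_left, pow_one]
    exact smul_mono_right a inf_le_right
  have hx' : (x : R) ∈ a • Submodule.map b.subtype ⊤ := by
    rw [Submodule.map_subtype_top]
    exact hAR ⟨by simpa [Ideal.mul_top] using hx, x.2⟩
  rw [← Submodule.map_smul''] at hx'
  obtain ⟨y, hy, hyx⟩ := hx'
  rw [← Subtype.ext hyx]
  exact (Submodule.smul_le.2 fun r hr y _ => by simp [ha r hr y] : a • ⊤ ≤ LinearMap.ker φ) hy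

end SupportTorsion

theorem injective_supportTorsion {R : Type u} [CommRing R] [IsNoetherianRing R]
    (V : Set (PrimeSpectrum R)) (P : Type u) [AddCommGroup P] [Module R P]
    [Module.Injective R P] : Module.Injective R (supportTorsion V P) := by
  refine Module.Baer.injective fun b φ => ?_
  set a := Module.annihilator R (LinearMap.range φ)
  have ha : zeroLocus (a : Set R) ⊆ V := by
    rw [← Module.support_eq_zeroLocus]
    exact (Module.support_subset_of_injective _ (LinearMap.range φ).injective_subtype).trans
      support_supportTorsion_subset
  obtain ⟨k, hk⟩ := exists_comap_pow_le_ker φ fun r hr x =>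
    congrArg Subtype.val (Module.mem_annihilator.1 hr ⟨φ x, LinearMap.mem_range_self φ x⟩)
  obtain ⟨p, hpk, hp⟩ := Module.Injective.exists_le_torsionOf_and_smul_eq
    ((supportTorsion V P).subtype ∘ₗ φ) (hk.trans (LinearMap.ker_le_ker_comp _ _))
  exact ⟨LinearMap.toSpanSingleton R _ ⟨p, mem_supportTorsion_of_pow_le ha hpk⟩,
    fun x hx => Subtype.ext (hp ⟨x, hx⟩)⟩

section Complex

variable {R : Type u} [CommRing R] {E : ℤ → Type u} [∀ i, AddCommGroup (E i)]
  [∀ i, Module R (E i)] (d : ∀ i, E i →ₗ[R] E (i + 1))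

def ExactOn (N : ∀ i, Submodule R (E i)) : Prop :=
  ∀ i, ∀ x ∈ N (i + 1), d (i + 1) x = 0 → ∃ y ∈ N i, d i y = x

variable {d}

theorem ExactOn.inf_supportTorsion_zeroLocus_singleton [IsNoetherianRing R]
    (hdd : ∀ i x, d (i + 1) (d i x) = 0) {N : ∀ i, Submodule R (E i)}
    (hN : ∀ i, ∀ x ∈ N i, d i x ∈ N (i + 1)) (hinj : ∀ i, Module.Injective R (N i))
    (hex : ExactOn d N) (f : R) :
    ExactOn d fun i => N i ⊓ supportTorsion (zeroLocus {f}) (E i) := by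
  rintro i x ⟨hxN, hxf⟩ hdx
  obtain ⟨j, rfl⟩ : ∃ j, i = j + 1 := ⟨i - 1, by omega⟩
  obtain ⟨t, hft⟩ := mem_supportTorsion_zeroLocus_singleton.1 hxf
  -- `f ^ t • z` is a cycle, hence a boundary `d ξ`; dividing `ξ` by a power of `f` inside the
  -- injective module `N j` corrects `z` by a boundary to an `f`-power torsion element.
  obtain ⟨z, hzN, hdz⟩ := hex _ x hxN hdx
  obtain ⟨ξ, hξN, hdξ⟩ := hex j (f ^ t • z) ((N _).smul_mem _ hzN) (by rw [map_smul, hdz, hft])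
  have := hinj j
  obtain ⟨s, w, hw⟩ := Module.Injective.exists_pow_smul_eq_pow_smul f (⟨ξ, hξN⟩ : N j) t
  have hw' : f ^ (s + t) • (w : E j) = f ^ s • ξ := congrArg Subtype.val hw
  refine ⟨z - d j w, ⟨(N _).sub_mem hzN (hN j w w.2), ?_⟩, by rw [map_sub, hdz, hdd, sub_zero]⟩
  refine mem_supportTorsion_zeroLocus_singleton.2 ⟨s + t, ?_⟩
  rw [smul_sub, ← map_smul, hw', map_smul, hdξ, smul_smul, ← pow_add, sub_self]

theorem exactOn_supportTorsion_zeroLocus [IsNoetherianRing R]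
    (hinj : ∀ i, Module.Injective R (E i))
    (hexact : ∀ i, LinearMap.range (d i) = LinearMap.ker (d (i + 1))) (S : Finset R) :
    ExactOn d fun i => supportTorsion (zeroLocus (S : Set R)) (E i) := by
  classical
  induction S using Finset.induction_on with
  | empty =>
    rintro i x - hdx
    obtain ⟨y, rfl⟩ := (hexact i).ge hdx
    exact ⟨y, fun _ _ => by simp, rfl⟩
  | insert f S _ ih =>
    rw [Finset.coe_insert, Set.insert_eq, zeroLocus_union]
    simp_rw [supportTorsion_inter, inf_comm (a := supportTorsion (zeroLocus {f}) _)]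
    exact ih.inf_supportTorsion_zeroLocus_singleton (fun i x => (hexact i).le ⟨x, rfl⟩)
      (fun i _ => map_mem_supportTorsion (d i)) (fun i => injective_supportTorsion _ _) f

theorem exactOn_supportTorsion [IsNoetherianRing R] (hinj : ∀ i, Module.Injective R (E i))
    (hexact : ∀ i, LinearMap.range (d i) = LinearMap.ker (d (i + 1)))
    (V : Set (PrimeSpectrum R)) : ExactOn d fun i => supportTorsion V (E i) := by
  intro i x hx hdx
  obtain ⟨S, hS⟩ := IsNoetherian.noetherian (Ideal.torsionOf R _ x)
  have hSx : zeroLocus (S : Set R) = zeroLocus (Ideal.torsionOf R _ x : Set R) := by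
    rw [← zeroLocus_span]
    exact congrArg (fun I : Ideal R => zeroLocus (I : Set R)) hS
  obtain ⟨y, hy, hdy⟩ :=
    exactOn_supportTorsion_zeroLocus hinj hexact S i x (mem_supportTorsion.2 hSx.ge) hdx
  exact ⟨y, supportTorsion_mono (hSx.le.trans hx) hy, hdy⟩

theorem range_eq_ker_of_exactOn (hdd : ∀ i x, d (i + 1) (d i x) = 0)
    {N : ∀ i, Submodule R (E i)} (hex : ExactOn d N) (δ : ∀ i, N i →ₗ[R] N (i + 1))
    (hδ : ∀ i x, (δ i x : E (i + 1)) = d i x) (i : ℤ) :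
    LinearMap.range (δ i) = LinearMap.ker (δ (i + 1)) := by
  ext x
  constructor
  · rintro ⟨y, rfl⟩
    exact Subtype.ext (by rw [hδ, hδ, hdd]; rfl)
  · intro hx
    obtain ⟨y, hy, hdy⟩ := hex i x x.2 (by rw [← hδ, LinearMap.mem_ker.1 hx]; rfl)
    exact ⟨⟨y, hy⟩, Subtype.ext ((hδ i _).trans hdy)⟩

end Complex

theorem torsion_of_complete_injective_resolution_acyclic_general
    (R : Type) [CommRing R] [IsNoetherianRing R]
    (V : Set (PrimeSpectrum R))
    -- a complete injective resolution `E` of `G`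
    (E : ℤ → ModuleCat.{0} R) (d : ∀ i : ℤ, E i ⟶ E (i + 1))
    (hinj : ∀ i, Module.Injective R (E i))
    (hexact : ∀ i, LinearMap.range (d i).hom = LinearMap.ker (d (i + 1)).hom)
    -- the termwise `V`-torsion subcomplex `Γ_V(E)`
    (N : ∀ i : ℤ, Submodule R (E i))
    (hN : ∀ i, ∀ e : E i, e ∈ N i ↔ Module.support R ↥(Submodule.span R {e}) ⊆ V)
    (δ : ∀ i : ℤ, ↥(N i) →ₗ[R] ↥(N (i + 1)))
    (hδ : ∀ i, ∀ x : ↥(N i), ((δ i x : E (i + 1))) = d i (x : E i)) :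
    -- `Γ_V(E)` is a complex of injectives and is acyclic
    (∀ i, Module.Injective R ↥(N i)) ∧
    (∀ i : ℤ, LinearMap.range (δ i) = LinearMap.ker (δ (i + 1))) := by
  obtain rfl : N = fun i => supportTorsion V (E i) := funext fun i =>
    Submodule.ext fun e => (hN i e).trans mem_supportTorsion_iff_support_subset.symm
  have hdd : ∀ i x, d (i + 1) (d i x) = 0 := fun i x => (hexact i).le ⟨x, rfl⟩
  have := hinj
  exact ⟨fun i => injective_supportTorsion V (E i),
    range_eq_ker_of_exactOn hdd (exactOn_supportTorsion hinj hexact V) δ hδ⟩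

/-- Over a commutative noetherian ring of finite Krull dimension `n`, applying the
`V`-torsion functor termwise to a complete injective resolution `E` of a Gorenstein
injective module `G` yields an acyclic complex of injective modules. -/
theorem torsion_of_complete_injective_resolution_acyclic
    (R : Type) [CommRing R] [IsNoetherianRing R]
    (n : ℕ) (hdim : ringKrullDim R = (n : WithBot (WithTop ℕ)))
    (V : Set (PrimeSpectrum R))
    (hV : ∀ p ∈ V, ∀ q : PrimeSpectrum R, p.asIdeal ≤ q.asIdeal → q ∈ V)
    (G : Type) [AddCommGroup G] [Module R G]
    -- a complete injective resolution `E` of `G`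
    (E : ℤ → ModuleCat.{0} R) (d : ∀ i : ℤ, E i ⟶ E (i + 1))
    (hinj : ∀ i, Module.Injective R (E i))
    (hexact : ∀ i, LinearMap.range (d i).hom = LinearMap.ker (d (i + 1)).hom)
    (htot : ∀ (I : ModuleCat.{0} R), Module.Injective R I →
      ∀ (i : ℤ) (f : I ⟶ E (i + 1)), f ≫ d (i + 1) = 0 →
        ∃ g : I ⟶ E i, g ≫ d i = f)
    (hsyz : Nonempty (G ≃ₗ[R] LinearMap.ker (d 0).hom))
    -- the termwise `V`-torsion subcomplex `Γ_V(E)`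
    (N : ∀ i : ℤ, Submodule R (E i))
    (hN : ∀ i, ∀ e : E i, e ∈ N i ↔ Module.support R ↥(Submodule.span R {e}) ⊆ V)
    (δ : ∀ i : ℤ, ↥(N i) →ₗ[R] ↥(N (i + 1)))
    (hδ : ∀ i, ∀ x : ↥(N i), ((δ i x : E (i + 1))) = d i (x : E i)) :
    -- `Γ_V(E)` is a complex of injectives and is acyclic
    (∀ i, Module.Injective R ↥(N i)) ∧
    (∀ i : ℤ, LinearMap.range (δ i) = LinearMap.ker (δ (i + 1))) :=
  torsion_of_complete_injective_resolution_acyclic_general R V E d hinj hexact N hN δ hδ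
end
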